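/- (Lemma 1 of the paper.) Let H, W be positive integers with W ≥ 2, let X ∈ ℝ^{H×W} be a fixed matrix, let (N_{(i,j)}) be independent real Gaussian random variables with mean 0 and variances σ_{(i,j)}² ≥ 0, and set Y = X + N. For n = 1, …, N let M_n be a random trace-wise Bernoulli mask with parameter p ∈ (0,1): each M_n is built from a random vector v_n ∈ {0,1}^W with independent entries satisfying P(v_{n,(j)} = 1) = p and P(v_{n,(j)} = 0) = 1 − p, via (M_n)_{(i,j)} = v_{n,(j)} for all i; assume the masks (M_n) are independent of N. Let f : ℝ^{H×W} → ℝ^{H×W} be a measurable map, set Ŷ_n = M_n ⊙ Y, and assume for each n that every entry of f(Ŷ_n) is square-integrable and that the quantity ‖f(Ŷ_n)‖_{TV,W̄} is integrable, where W̄ ∈ ℝ^{H×(W−1)} is a fixed nonnegative weight matrix and γ ≥ 0. Then E[ Σ_{n=1}^{N} ( ‖(Y − f(Ŷ_n)) ⊙ (1 − M_n)‖_F² + γ ‖f(Ŷ_n)‖_{TV,W̄} ) ] = E[ Σ_{n=1}^{N} ( ‖(X − f(Ŷ_n)) ⊙ (1 − M_n)‖_F² + ‖σ ⊙ (1 − M_n)‖_F²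 + γ ‖f(Ŷ_n)‖_{TV,W̄} ) ], where σ ∈ ℝ^{H×W} is the matrix of standard deviations σ_{(i,j)} and 1 denotes the all-ones matrix. -/

import Mathlib

open MeasureTheory ProbabilityTheory Finset

/-- Horizontal derivative operator: maps `X ∈ ℝ^{H×W}` to the matrix in `ℝ^{H×(W-1)}`
with entries `(∇_h X)_{(i,j)} = X_{(i,j+1)} - X_{(i,j)}`. -/
def gradH {H W : ℕ} (X : Fin H → Fin W → ℝ) : Fin H → Fin (W - 1) → ℝ :=
  fun i j => X i ⟨j.1 + 1, by omega⟩ - X i ⟨j.1, by omega⟩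

/-- Weighted total variation: `‖X‖_{TV,W̄} = ‖W̄ ⊙ (∇_h X)‖_{ℓ1}`. -/
def wtv {H W : ℕ} (Wbar : Fin H → Fin (W - 1) → ℝ) (X : Fin H → Fin W → ℝ) : ℝ :=
  ∑ i : Fin H, ∑ j : Fin (W - 1), Wbar i j * |gradH X i j|

/- Auxiliary lemmas -/

open MeasureTheory ProbabilityTheory Finset Real Filter

section GaussAux

lemma hasDerivAt_gaussAnti {b : ℝ} (hb : 0 < b) (x : ℝ) :
    HasDerivAt (fun y : ℝ => -(2*b)⁻¹ * Real.exp (-b * y^2)) (x * Real.exp (-b * x^2)) x := by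
  have h1 : HasDerivAt (fun y : ℝ => -b * y^2) (-b * (2 * x)) x := by
    simpa using (HasDerivAt.const_mul (-b) (hasDerivAt_pow 2 x))
  have h2 := (h1.exp).const_mul (-(2*b)⁻¹)
  refine h2.congr_deriv ?_
  have hb' : b ≠ 0 := ne_of_gt hb
  field_simp

lemma integral_x_exp {b : ℝ} (hb : 0 < b) :
    ∫ x : ℝ, x * Real.exp (-b * x^2) = 0 := by
  refine integral_eq_zero_of_hasDerivAt_of_integrable (hasDerivAt_gaussAnti hb)
    (integrable_mul_exp_neg_mul_sq hb) ?_
  exact (integrable_exp_neg_mul_sq hb).const_mul _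

lemma rpow_two_eq (x : ℝ) : x ^ (2:ℝ) = x ^ 2 := by
  rw [show (2:ℝ) = ((2:ℕ):ℝ) by norm_num, Real.rpow_natCast]

lemma integral_x_sq_exp {b : ℝ} (hb : 0 < b) :
    ∫ x : ℝ, x^2 * Real.exp (-b * x^2) = (2*b)⁻¹ * Real.sqrt (π / b) := by
  have hu : ∀ x : ℝ, HasDerivAt (fun y : ℝ => y) 1 x := fun x => hasDerivAt_id x
  have hv := hasDerivAt_gaussAnti hb
  have huv' : Integrable ((fun y : ℝ => y) * fun x : ℝ => x * Real.exp (-b * x^2)) := by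
    have h := integrable_rpow_mul_exp_neg_mul_sq hb (by norm_num : (-1:ℝ) < 2)
    refine h.congr (Filter.Eventually.of_forall fun x => ?_)
    simp only [Pi.mul_apply, rpow_two_eq]
    ring
  have hu'v : Integrable ((fun _ : ℝ => (1:ℝ)) * fun x : ℝ => -(2*b)⁻¹ * Real.exp (-b * x^2)) := by
    have h := (integrable_exp_neg_mul_sq hb).const_mul (-(2*b)⁻¹)
    refine h.congr (Filter.Eventually.of_forall fun x => ?_)
    simp [Pi.mul_apply]
  have huv : Integrable ((fun y : ℝ => y) * fun x : ℝ => -(2*b)⁻¹ * Real.exp (-b * x^2)) := by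
    have h := (integrable_mul_exp_neg_mul_sq hb).const_mul (-(2*b)⁻¹)
    refine h.congr (Filter.Eventually.of_forall fun x => ?_)
    simp only [Pi.mul_apply]
    ring
  have h := integral_mul_deriv_eq_deriv_mul_of_integrable (fun x _ => hu x) (fun x _ => hv x) huv' hu'v huv
  have hL : (∫ x : ℝ, x * (x * Real.exp (-b * x^2))) = ∫ x : ℝ, x^2 * Real.exp (-b * x^2) := by
    refine integral_congr_ae (Filter.Eventually.of_forall fun x => ?_)
    ring
  rw [hL] at h
  rw [h]
  have : (∫ x : ℝ, (1:ℝ) * (-(2*b)⁻¹ * Real.exp (-b * x^2)))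
      = -(2*b)⁻¹ * ∫ x : ℝ, Real.exp (-b * x^2) := by
    rw [← integral_const_mul]
    refine integral_congr_ae (Filter.Eventually.of_forall fun x => ?_)
    ring
  rw [this, integral_gaussian]
  ring

end GaussAux

open MeasureTheory ProbabilityTheory Finset Real Filter

section GaussReal
open scoped ENNReal NNReal

lemma gaussianPDF_eq_coe (v : ℝ≥0) :
    gaussianPDF 0 v = fun x => ((gaussianPDFReal 0 v x).toNNReal : ℝ≥0∞) := rfl

lemma gaussianPDFReal_zero_mean (v : ℝ≥0) (hv : v ≠ 0) (x : ℝ) :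
    gaussianPDFReal 0 v x = (Real.sqrt (2 * π * v))⁻¹ * Real.exp (-(2*(v:ℝ))⁻¹ * x ^ 2) := by
  have hv' : (0:ℝ) < v := by positivity
  rw [gaussianPDFReal, sub_zero]
  congr 1
  rw [show -x^2/(2*(v:ℝ)) = -(2*(v:ℝ))⁻¹ * x^2 by field_simp]

lemma integral_gaussianReal_eq (v : ℝ≥0) (hv : v ≠ 0) (g : ℝ → ℝ) :
    ∫ x, g x ∂(gaussianReal 0 v) = ∫ x, gaussianPDFReal 0 v x * g x := by
  rw [gaussianReal_of_var_ne_zero 0 hv, gaussianPDF_eq_coe,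
    integral_withDensity_eq_integral_smul ((measurable_gaussianPDFReal 0 v).real_toNNReal) g]
  refine integral_congr_ae (Filter.Eventually.of_forall fun x => ?_)
  simp [NNReal.smul_def, Real.coe_toNNReal _ (gaussianPDFReal_nonneg 0 v x)]

lemma integrable_gaussianReal_iff (v : ℝ≥0) (hv : v ≠ 0) (g : ℝ → ℝ) :
    Integrable g (gaussianReal 0 v)
      ↔ Integrable (fun x => gaussianPDFReal 0 v x * g x) volume := by
  rw [gaussianReal_of_var_ne_zero 0 hv, gaussianPDF_eq_coe,
    integrable_withDensity_iff_integrable_smul ((measurable_gaussianPDFReal 0 v).real_toNNReal)]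
  constructor <;> intro h <;> refine h.congr (Filter.Eventually.of_forall fun x => ?_) <;>
    simp [NNReal.smul_def, Real.coe_toNNReal _ (gaussianPDFReal_nonneg 0 v x)]

lemma integral_id_gaussianReal_zero (v : ℝ≥0) : ∫ x, x ∂(gaussianReal 0 v) = 0 := by
  by_cases hv : v = 0
  · subst hv; simp [gaussianReal_zero_var, integral_dirac]
  · have hv' : (0:ℝ) < v := by positivity
    have hb : (0:ℝ) < (2*(v:ℝ))⁻¹ := by positivity
    rw [integral_gaussianReal_eq v hv]
    have : (fun x => gaussianPDFReal 0 v x * x)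
        = fun x => (Real.sqrt (2 * π * v))⁻¹ * (x * Real.exp (-(2*(v:ℝ))⁻¹ * x^2)) := by
      funext x
      rw [gaussianPDFReal_zero_mean v hv]
      ring
    rw [this, integral_const_mul, integral_x_exp hb, mul_zero]

lemma integral_sq_gaussianReal_zero (v : ℝ≥0) : ∫ x, x^2 ∂(gaussianReal 0 v) = v := by
  by_cases hv : v = 0
  · subst hv; simp [gaussianReal_zero_var, integral_dirac]
  · have hv' : (0:ℝ) < v := by positivity
    have hb : (0:ℝ) < (2*(v:ℝ))⁻¹ := by positivity
    rw [integral_gaussianReal_eq v hv]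
    have : (fun x => gaussianPDFReal 0 v x * x^2)
        = fun x => (Real.sqrt (2 * π * v))⁻¹ * (x^2 * Real.exp (-(2*(v:ℝ))⁻¹ * x^2)) := by
      funext x
      rw [gaussianPDFReal_zero_mean v hv]
      ring
    rw [this, integral_const_mul, integral_x_sq_exp hb]
    have h1 : π / (2*(v:ℝ))⁻¹ = 2 * π * v := by field_simp
    have h2 : (2 * (2*(v:ℝ))⁻¹)⁻¹ = (v:ℝ) := by field_simp
    rw [h1, h2]
    have hs : Real.sqrt (2 * π * v) ≠ 0 := by positivity
    field_simp

lemma memLp_two_id_gaussianReal_zero (v : ℝ≥0) : MemLp id 2 (gaussianReal 0 v) := by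
  by_cases hv : v = 0
  · subst hv
    rw [gaussianReal_zero_var]
    have h : (fun _ : ℝ => (0:ℝ)) =ᵐ[Measure.dirac (0:ℝ)] (id : ℝ → ℝ) := by
      rw [ae_dirac_eq]
      exact Filter.eventually_pure.2 rfl
    exact (memLp_const (0:ℝ)).ae_eq h
  · have hv' : (0:ℝ) < v := by positivity
    have hb : (0:ℝ) < (2*(v:ℝ))⁻¹ := by positivity
    rw [memLp_two_iff_integrable_sq aestronglyMeasurable_id]
    rw [show (fun x : ℝ => id x ^ 2) = fun x : ℝ => x ^ 2 from rfl]
    rw [integrable_gaussianReal_iff v hv]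
    have : (fun x => gaussianPDFReal 0 v x * x^2)
        = fun x => (Real.sqrt (2 * π * v))⁻¹ * (x^2 * Real.exp (-(2*(v:ℝ))⁻¹ * x^2)) := by
      funext x
      rw [gaussianPDFReal_zero_mean v hv]
      ring
    rw [this]
    refine Integrable.const_mul ?_ _
    have h := integrable_rpow_mul_exp_neg_mul_sq hb (by norm_num : (-1:ℝ) < 2)
    refine h.congr (Filter.Eventually.of_forall fun x => ?_)
    simp only [rpow_two_eq]

end GaussReal

open MeasureTheory ProbabilityTheory Finset Real Filter

section IndepAux

variable {Ω α β γ : Type*} [MeasurableSpace Ω] [mα : MeasurableSpace α]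
  [mβ : MeasurableSpace β] [mγ : MeasurableSpace γ] {μ : Measure Ω} [IsProbabilityMeasure μ]

/-- If `X ⊥ Y` and `Z ⊥ (X, Y)`, then `X ⊥ (Z, Y)`. -/
lemma indepFun_prod_mk_of_indepFun {X : Ω → α} {Y : Ω → β} {Z : Ω → γ}
    (hX : Measurable X) (hY : Measurable Y) (hZ : Measurable Z)
    (hXY : IndepFun X Y μ) (hZXY : IndepFun Z (fun ω => (X ω, Y ω)) μ) :
    IndepFun X (fun ω => (Z ω, Y ω)) μ := by
  have hpair : Measurable fun ω => (Z ω, Y ω) := hZ.prodMk hY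
  show Indep (mα.comap X) ((Prod.instMeasurableSpace).comap fun ω => (Z ω, Y ω)) μ
  set p1 : Set (Set Ω) := {t | ∃ s, MeasurableSet s ∧ X ⁻¹' s = t} with hp1def
  set p2 : Set (Set Ω) :=
    (Set.preimage fun ω => (Z ω, Y ω)) ''
      (Set.image2 (· ×ˢ ·) { s : Set γ | MeasurableSet s } { t : Set β | MeasurableSet t })
    with hp2def
  have hgen1 : mα.comap X = MeasurableSpace.generateFrom p1 :=
    MeasurableSpace.comap_eq_generateFrom _ _
  have hgen2 : (Prod.instMeasurableSpace : MeasurableSpace (γ × β)).comap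
      (fun ω => (Z ω, Y ω)) = MeasurableSpace.generateFrom p2 := by
    rw [← generateFrom_prod, MeasurableSpace.comap_generateFrom]
  have hpi1 : IsPiSystem p1 := by
    rintro _ ⟨s, hs, rfl⟩ _ ⟨t, ht, rfl⟩ -
    exact ⟨s ∩ t, hs.inter ht, rfl⟩
  have hpi2 : IsPiSystem p2 := by
    have h := (isPiSystem_prod (α := γ) (β := β)).comap (fun ω => (Z ω, Y ω))
    exact h
  refine IndepSets.indep hX.comap_le hpair.comap_le hpi1 hpi2 hgen1 hgen2 ?_
  rintro _ _ ⟨s, hs, rfl⟩ ⟨w, hw, rfl⟩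
  rw [Set.mem_image2] at hw
  obtain ⟨A, hA, B, hB, rfl⟩ := hw
  simp only [ae_dirac_eq, Filter.eventually_pure, Kernel.const_apply]
  have hprB : (fun ω => (Z ω, Y ω)) ⁻¹' (A ×ˢ B) = Z ⁻¹' A ∩ Y ⁻¹' B :=
    Set.mk_preimage_prod _ _
  have hXYB : (fun ω => (X ω, Y ω)) ⁻¹' (s ×ˢ B) = X ⁻¹' s ∩ Y ⁻¹' B :=
    Set.mk_preimage_prod _ _
  have hXYB' : (fun ω => (X ω, Y ω)) ⁻¹' (Set.univ ×ˢ B) = Y ⁻¹' B := by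
    rw [Set.mk_preimage_prod]
    simp
  have key1 : μ (Z ⁻¹' A ∩ (X ⁻¹' s ∩ Y ⁻¹' B)) = μ (Z ⁻¹' A) * μ (X ⁻¹' s ∩ Y ⁻¹' B) := by
    have := hZXY.measure_inter_preimage_eq_mul A (s ×ˢ B) hA (hs.prod hB)
    rwa [hXYB] at this
  have key2 : μ (X ⁻¹' s ∩ Y ⁻¹' B) = μ (X ⁻¹' s) * μ (Y ⁻¹' B) :=
    hXY.measure_inter_preimage_eq_mul s B hs hB
  have key3 : μ (Z ⁻¹' A ∩ Y ⁻¹' B) = μ (Z ⁻¹' A) * μ (Y ⁻¹' B) := by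
    have := hZXY.measure_inter_preimage_eq_mul A (Set.univ ×ˢ B) hA (MeasurableSet.univ.prod hB)
    rwa [hXYB'] at this
  rw [hprB, show X ⁻¹' s ∩ (Z ⁻¹' A ∩ Y ⁻¹' B) = Z ⁻¹' A ∩ (X ⁻¹' s ∩ Y ⁻¹' B) by
    rw [Set.inter_left_comm], key1, key2, key3]
  ring

end IndepAux

open MeasureTheory ProbabilityTheory Finset Real Filter

section MainAux

variable {Ω : Type*} [MeasurableSpace Ω] {μ : Measure Ω}

lemma integrable_mul_bdd {g w : Ω → ℝ} (hg : Integrable g μ) (hw : Measurable w)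
    (hbd : ∀ ω, |w ω| ≤ 1) : Integrable (fun ω => g ω * w ω) μ := by
  have h := hg.bdd_mul (c := 1) hw.aestronglyMeasurable (Filter.Eventually.of_forall fun ω => by simpa using hbd ω)
  refine h.congr (Filter.Eventually.of_forall fun ω => ?_)
  ring

lemma integrable_sq_mul_bdd [IsFiniteMeasure μ] {g w : Ω → ℝ} (hg : MemLp g 2 μ)
    (hw : Measurable w) (hbd : ∀ ω, |w ω| ≤ 1) :
    Integrable (fun ω => (g ω * w ω) ^ 2) μ := by
  have h1 : Integrable (fun ω => g ω ^ 2) μ :=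
    (memLp_two_iff_integrable_sq hg.aestronglyMeasurable).1 hg
  have h2 : Integrable (fun ω => g ω ^ 2 * w ω ^ 2) μ := by
    refine integrable_mul_bdd h1 (hw.pow_const 2) fun ω => ?_
    rw [abs_pow]
    calc |w ω| ^ 2 ≤ 1 ^ 2 := by
          exact pow_le_pow_left₀ (abs_nonneg _) (hbd ω) 2
      _ = 1 := one_pow 2
  refine h2.congr (Filter.Eventually.of_forall fun ω => ?_)
  ring

lemma core_identity (μ : Measure Ω) [IsProbabilityMeasure μ]
    {H W : ℕ} (X : Fin H → Fin W → ℝ)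
    (N : Fin H × Fin W → Ω → ℝ) (hNmeas : ∀ p, Measurable (N p))
    (σij : ℝ) (hσij : 0 ≤ σij) (i : Fin H) (j : Fin W)
    (hNgauss : Measure.map (N (i, j)) μ = gaussianReal 0 (σij.toNNReal ^ 2))
    (hNindep : iIndepFun N μ)
    {numMasks : ℕ} (v : Fin numMasks → Ω → Fin W → ℝ) (hvmeas : ∀ n, Measurable (v n))
    (hvbin : ∀ n ω j, v n ω j = 0 ∨ v n ω j = 1)
    (hMNindep : IndepFun (fun ω (n : Fin numMasks) (j : Fin W) => v n ω j)
      (fun ω (q : Fin H × Fin W) => N q ω) μ)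
    (f : (Fin H → Fin W → ℝ) → Fin H → Fin W → ℝ) (hf : Measurable f)
    (n : Fin numMasks)
    (hFL2 : MemLp (fun ω => f (fun i' j' => v n ω j' * (X i' j' + N (i', j') ω)) i j) 2 μ) :
    ∫ ω, ((X i j + N (i, j) ω
          - f (fun i' j' => v n ω j' * (X i' j' + N (i', j') ω)) i j) * (1 - v n ω j)) ^ 2 ∂μ
      = ∫ ω, ((X i j
          - f (fun i' j' => v n ω j' * (X i' j' + N (i', j') ω)) i j) * (1 - v n ω j)) ^ 2 ∂μ
        + ∫ ω, (σij * (1 - v n ω j)) ^ 2 ∂μ := by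
  obtain ⟨Fi, hFi⟩ : ∃ Fi : Ω → ℝ,
      Fi = fun ω => f (fun i' j' => v n ω j' * (X i' j' + N (i', j') ω)) i j := ⟨_, rfl⟩
  have hFiω : ∀ ω, f (fun i' j' => v n ω j' * (X i' j' + N (i', j') ω)) i j = Fi ω :=
    fun ω => by rw [hFi]
  simp only [hFiω]
  -- basic measurability and bounds
  have mv : Measurable fun ω => v n ω j := (measurable_pi_apply j).comp (hvmeas n)
  have mw : Measurable fun ω => 1 - v n ω j := measurable_const.sub mv
  have hwb : ∀ ω, |1 - v n ω j| ≤ 1 := fun ω => by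
    rcases hvbin n ω j with h | h <;> rw [h] <;> norm_num
  have hww : ∀ ω, (1 - v n ω j) ^ 2 = 1 - v n ω j := fun ω => by
    rcases hvbin n ω j with h | h <;> rw [h] <;> norm_num
  -- L² facts
  have hNL2 : MemLp (N (i, j)) 2 μ := by
    have h0 : MemLp id 2 (Measure.map (N (i, j)) μ) := by
      rw [hNgauss]; exact memLp_two_id_gaussianReal_zero _
    exact (memLp_map_measure_iff aestronglyMeasurable_id (hNmeas (i, j)).aemeasurable).1 h0
  have hFiL2 : MemLp Fi 2 μ := by rw [hFi]; exact hFL2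
  have intN : Integrable (N (i, j)) μ := hNL2.integrable one_le_two
  have intN2 : Integrable (fun ω => N (i, j) ω ^ 2) μ :=
    (memLp_two_iff_integrable_sq hNL2.aestronglyMeasurable).1 hNL2
  have intC : Integrable (fun ω => (X i j - Fi ω) * (1 - v n ω j)) μ :=
    integrable_mul_bdd ((integrable_const (X i j)).sub (hFiL2.integrable one_le_two)) mw hwb
  have intN2w : Integrable (fun ω => N (i, j) ω ^ 2 * (1 - v n ω j)) μ :=
    integrable_mul_bdd intN2 mw hwb
  have intw : Integrable (fun ω => 1 - v n ω j) μ := by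
    have h0 : Integrable (fun _ : Ω => (1 : ℝ)) μ := integrable_const (1 : ℝ)
    have := integrable_mul_bdd h0 mw hwb
    simpa using this
  have intXFi : Integrable (fun ω => ((X i j - Fi ω) * (1 - v n ω j)) ^ 2) μ :=
    integrable_sq_mul_bdd ((memLp_const (X i j)).sub hFiL2) mw hwb
  -- Gaussian moments
  have hNmean : ∫ ω, N (i, j) ω ∂μ = 0 := by
    have h1 : ∫ ω, N (i, j) ω ∂μ = ∫ x, x ∂(Measure.map (N (i, j)) μ) :=
      (integral_map (hNmeas (i, j)).aemeasurable aestronglyMeasurable_id).symm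
    rw [hNgauss] at h1
    rw [h1, integral_id_gaussianReal_zero]
  have hNsq : ∫ ω, N (i, j) ω ^ 2 ∂μ = σij ^ 2 := by
    have h1 : ∫ ω, N (i, j) ω ^ 2 ∂μ = ∫ x, x ^ 2 ∂(Measure.map (N (i, j)) μ) :=
      (integral_map (hNmeas (i, j)).aemeasurable
        ((measurable_id.pow_const 2).aestronglyMeasurable)).symm
    rw [hNgauss] at h1
    rw [h1, integral_sq_gaussianReal_zero]
    push_cast
    rw [Real.coe_toNNReal _ hσij]
  -- independence of N (i,j) and the masked residual
  have mvAll : Measurable fun ω (n' : Fin numMasks) (j' : Fin W) => v n' ω j' :=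
    measurable_pi_lambda _ fun n' => hvmeas n'
  have mNz : Measurable fun ω (q' : Fin H × Fin W) =>
      if _h : q' = (i, j) then (0 : ℝ) else N q' ω := by
    refine measurable_pi_lambda _ fun q' => ?_
    by_cases h : q' = (i, j)
    · simp only [dif_pos h]; exact measurable_const
    · simp only [dif_neg h]; exact hNmeas q'
  have h1 : IndepFun (N (i, j))
      (fun ω (q' : Fin H × Fin W) => if _h : q' = (i, j) then (0 : ℝ) else N q' ω) μ := by
    have base := hNindep.indepFun_finset {(i, j)} {(i, j)}ᶜ disjoint_compl_right hNmeas
    have hφ : Measurable fun g : ({(i, j)} : Finset (Fin H × Fin W)) → ℝ =>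
        g ⟨(i, j), Finset.mem_singleton_self _⟩ := measurable_pi_apply _
    have hψ : Measurable fun (g : (({(i, j)}ᶜ : Finset (Fin H × Fin W)) : Type) → ℝ)
        (q' : Fin H × Fin W) =>
        if h : q' = (i, j) then (0 : ℝ)
        else g ⟨q', by simp [Finset.mem_compl, Finset.mem_singleton, h]⟩ := by
      refine measurable_pi_lambda _ fun q' => ?_
      by_cases h : q' = (i, j)
      · simp only [dif_pos h]; exact measurable_const
      · simp only [dif_neg h]; exact measurable_pi_apply _
    exact base.comp hφ hψ
  have h2 : IndepFun (fun ω (n' : Fin numMasks) (j' : Fin W) => v n' ω j')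
      (fun ω => (N (i, j) ω,
        fun q' : Fin H × Fin W => if _h : q' = (i, j) then (0 : ℝ) else N q' ω)) μ := by
    have hψ2 : Measurable fun g : (Fin H × Fin W) → ℝ =>
        (g (i, j), fun q' : Fin H × Fin W => if _h : q' = (i, j) then (0 : ℝ) else g q') := by
      refine (measurable_pi_apply _).prodMk (measurable_pi_lambda _ fun q' => ?_)
      by_cases h : q' = (i, j)
      · simp only [dif_pos h]; exact measurable_const
      · simp only [dif_neg h]; exact measurable_pi_apply _
    exact hMNindep.comp measurable_id hψ2
  have h3 : IndepFun (N (i, j))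
      (fun ω => ((fun (n' : Fin numMasks) (j' : Fin W) => v n' ω j'),
        (fun q' : Fin H × Fin W => if _h : q' = (i, j) then (0 : ℝ) else N q' ω))) μ :=
    indepFun_prod_mk_of_indepFun (hNmeas (i, j)) mNz mvAll h1 h2
  have hindC : IndepFun (N (i, j)) (fun ω => (X i j - Fi ω) * (1 - v n ω j)) μ := by
    have hg : Measurable fun z : (Fin numMasks → Fin W → ℝ) × ((Fin H × Fin W) → ℝ) =>
        (X i j - f (fun i' j' => z.1 n j' * (X i' j' + z.2 (i', j'))) i j) * (1 - z.1 n j) := by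
      have hmat : Measurable fun z : (Fin numMasks → Fin W → ℝ) × ((Fin H × Fin W) → ℝ) =>
          (fun i' j' => z.1 n j' * (X i' j' + z.2 (i', j'))) :=
        measurable_pi_lambda _ fun i' => measurable_pi_lambda _ fun j' => by
          fun_prop
      exact (measurable_const.sub
          ((measurable_pi_apply j).comp ((measurable_pi_apply i).comp (hf.comp hmat)))).mul
        (measurable_const.sub
          ((measurable_pi_apply j).comp ((measurable_pi_apply n).comp measurable_fst)))
    have h4 := h3.comp measurable_id hg
    have hEq : ((fun z : (Fin numMasks → Fin W → ℝ) × ((Fin H × Fin W) → ℝ) =>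
        (X i j - f (fun i' j' => z.1 n j' * (X i' j' + z.2 (i', j'))) i j) * (1 - z.1 n j)) ∘
        (fun ω => ((fun (n' : Fin numMasks) (j' : Fin W) => v n' ω j'),
          (fun q' : Fin H × Fin W => if _h : q' = (i, j) then (0 : ℝ) else N q' ω))))
        = fun ω => (X i j - Fi ω) * (1 - v n ω j) := by
      funext ω
      simp only [Function.comp_apply, hFi]
      rcases hvbin n ω j with h | h
      · have harg : (fun i' j' => v n ω j' *
            (X i' j' + if _h : (i', j') = (i, j) then (0 : ℝ) else N (i', j') ω))
            = fun i' j' => v n ω j' * (X i' j' + N (i', j') ω) := by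
          funext i' j'
          by_cases hq : (i', j') = (i, j)
          · have hj : j' = j := congrArg Prod.snd hq
            rw [dif_pos hq, hj, h, zero_mul, zero_mul]
          · rw [dif_neg hq]
        rw [harg]
      · rw [h]; ring
    rw [hEq] at h4
    exact h4
  -- cross term vanishes
  have hcross : ∫ ω, N (i, j) ω * ((X i j - Fi ω) * (1 - v n ω j)) ∂μ = 0 := by
    have h := hindC.integral_mul_eq_mul_integral intN.aestronglyMeasurable intC.aestronglyMeasurable
    simp only [Pi.mul_def] at h
    rw [h, hNmean, zero_mul]
  have intNC : Integrable (fun ω => N (i, j) ω * ((X i j - Fi ω) * (1 - v n ω j))) μ := by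
    have h := hindC.integrable_mul intN intC
    simpa [Pi.mul_def] using h
  -- second moment term
  have hNw2 : IndepFun (fun ω => N (i, j) ω ^ 2) (fun ω => 1 - v n ω j) μ := by
    have hφ : Measurable fun g : Fin numMasks → Fin W → ℝ => 1 - g n j :=
      measurable_const.sub ((measurable_pi_apply j).comp (measurable_pi_apply n))
    have hψ : Measurable fun g : (Fin H × Fin W) → ℝ => g (i, j) ^ 2 :=
      (measurable_pi_apply _).pow_const 2
    exact (hMNindep.comp hφ hψ).symm
  have hsecond : ∫ ω, N (i, j) ω ^ 2 * (1 - v n ω j) ∂μ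
      = σij ^ 2 * ∫ ω, (1 - v n ω j) ∂μ := by
    have h := hNw2.integral_mul_eq_mul_integral intN2.aestronglyMeasurable intw.aestronglyMeasurable
    simp only [Pi.mul_def] at h
    rw [h, hNsq]
  have hσterm : ∫ ω, (σij * (1 - v n ω j)) ^ 2 ∂μ = σij ^ 2 * ∫ ω, (1 - v n ω j) ∂μ := by
    rw [← integral_const_mul]
    refine integral_congr_ae (Filter.Eventually.of_forall fun ω => ?_)
    show (σij * (1 - v n ω j)) ^ 2 = σij ^ 2 * (1 - v n ω j)
    rw [mul_pow, hww ω]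
  -- pointwise expansion
  have hptwise : ∀ ω, ((X i j + N (i, j) ω - Fi ω) * (1 - v n ω j)) ^ 2
      = ((X i j - Fi ω) * (1 - v n ω j)) ^ 2
        + (2 * (N (i, j) ω * ((X i j - Fi ω) * (1 - v n ω j)))
          + N (i, j) ω ^ 2 * (1 - v n ω j)) := by
    intro ω
    rcases hvbin n ω j with h | h <;> rw [h] <;> ring
  calc ∫ ω, ((X i j + N (i, j) ω - Fi ω) * (1 - v n ω j)) ^ 2 ∂μ
      = ∫ ω, (((X i j - Fi ω) * (1 - v n ω j)) ^ 2
          + (2 * (N (i, j) ω * ((X i j - Fi ω) * (1 - v n ω j)))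
            + N (i, j) ω ^ 2 * (1 - v n ω j))) ∂μ :=
        integral_congr_ae (Filter.Eventually.of_forall hptwise)
    _ = ∫ ω, ((X i j - Fi ω) * (1 - v n ω j)) ^ 2 ∂μ
        + ∫ ω, (2 * (N (i, j) ω * ((X i j - Fi ω) * (1 - v n ω j)))
            + N (i, j) ω ^ 2 * (1 - v n ω j)) ∂μ :=
        integral_add intXFi ((intNC.const_mul 2).add intN2w)
    _ = ∫ ω, ((X i j - Fi ω) * (1 - v n ω j)) ^ 2 ∂μ
        + (2 * ∫ ω, N (i, j) ω * ((X i j - Fi ω) * (1 - v n ω j)) ∂μ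
          + ∫ ω, N (i, j) ω ^ 2 * (1 - v n ω j) ∂μ) := by
        rw [integral_add (intNC.const_mul 2) intN2w, integral_const_mul]
    _ = ∫ ω, ((X i j - Fi ω) * (1 - v n ω j)) ^ 2 ∂μ
        + ∫ ω, (σij * (1 - v n ω j)) ^ 2 ∂μ := by
        rw [hcross, hsecond, hσterm]
        ring

end MainAux

/-- Lemma 1 of the paper: with trace-wise Bernoulli masks `M_n` independent of the
Gaussian noise `N`, the expected self-supervised WTV-regularized loss computed against
the noisy data `Y` equals the expected loss computed against the clean signal `X` plus
the masked noise energy `‖σ ⊙ (1 − M_n)‖_F²`. -/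
theorem s2s_wtv_lemma1
    {Ω : Type*} [MeasurableSpace Ω] (μ : Measure Ω) [IsProbabilityMeasure μ]
    (H W : ℕ) (hH : 0 < H) (hW : 2 ≤ W)
    (X : Fin H → Fin W → ℝ)
    (N : Fin H × Fin W → Ω → ℝ) (hNmeas : ∀ p, Measurable (N p))
    (σ : Fin H → Fin W → ℝ) (hσ : ∀ i j, 0 ≤ σ i j)
    (hNgauss : ∀ i j, Measure.map (N (i, j)) μ = gaussianReal 0 ((σ i j).toNNReal ^ 2))
    (hNindep : iIndepFun N μ)
    (Y : Ω → Fin H → Fin W → ℝ) (hY : Y = fun ω i j => X i j + N (i, j) ω)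
    (numMasks : ℕ) (p : ℝ) (hp : 0 < p) (hp1 : p < 1)
    (v : Fin numMasks → Ω → Fin W → ℝ) (hvmeas : ∀ n, Measurable (v n))
    (hvbin : ∀ n ω j, v n ω j = 0 ∨ v n ω j = 1)
    (hvindep : ∀ n, iIndepFun (fun j ω => v n ω j) μ)
    (hvone : ∀ n j, μ {ω | v n ω j = 1} = ENNReal.ofReal p)
    (hvzero : ∀ n j, μ {ω | v n ω j = 0} = ENNReal.ofReal (1 - p))
    (M : Fin numMasks → Ω → Fin H → Fin W → ℝ)
    (hM : M = fun n ω _i j => v n ω j)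
    (hMNindep : IndepFun (fun ω (n : Fin numMasks) (j : Fin W) => v n ω j)
      (fun ω (q : Fin H × Fin W) => N q ω) μ)
    (f : (Fin H → Fin W → ℝ) → Fin H → Fin W → ℝ) (hf : Measurable f)
    (F : Fin numMasks → Ω → Fin H → Fin W → ℝ)
    (hF : F = fun n ω => f (fun i j => M n ω i j * Y ω i j))
    (hFL2 : ∀ n i j, MemLp (fun ω => F n ω i j) 2 μ)
    (Wbar : Fin H → Fin (W - 1) → ℝ) (hWbar : ∀ i j, 0 ≤ Wbar i j)
    (γ : ℝ) (hγ : 0 ≤ γ)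
    (hwtvInt : ∀ n, Integrable (fun ω => wtv Wbar (F n ω)) μ) :
    ∫ ω, (∑ n : Fin numMasks,
        ((∑ i : Fin H, ∑ j : Fin W, ((Y ω i j - F n ω i j) * (1 - M n ω i j)) ^ 2) +
          γ * wtv Wbar (F n ω))) ∂μ =
      ∫ ω, (∑ n : Fin numMasks,
        ((∑ i : Fin H, ∑ j : Fin W, ((X i j - F n ω i j) * (1 - M n ω i j)) ^ 2) +
          (∑ i : Fin H, ∑ j : Fin W, (σ i j * (1 - M n ω i j)) ^ 2) +
          γ * wtv Wbar (F n ω))) ∂μ := by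
  subst hM hY
  have hF' : F = fun n ω => f (fun i j => v n ω j * (X i j + N (i, j) ω)) := hF
  clear hF
  subst hF'
  beta_reduce
  -- integrability of the pieces
  have mw : ∀ (n : Fin numMasks) (j : Fin W), Measurable fun ω => 1 - v n ω j :=
    fun n j => measurable_const.sub ((measurable_pi_apply j).comp (hvmeas n))
  have hwb : ∀ (n : Fin numMasks) (j : Fin W) (ω : Ω), |1 - v n ω j| ≤ 1 := fun n j ω => by
    rcases hvbin n ω j with h | h <;> rw [h] <;> norm_num
  have hFL2' : ∀ (n : Fin numMasks) (i : Fin H) (j : Fin W),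
      MemLp (fun ω => f (fun i' j' => v n ω j' * (X i' j' + N (i', j') ω)) i j) 2 μ :=
    fun n i j => hFL2 n i j
  have hNL2 : ∀ q : Fin H × Fin W, MemLp (N q) 2 μ := by
    rintro ⟨i, j⟩
    have h0 : MemLp id 2 (Measure.map (N (i, j)) μ) := by
      rw [hNgauss i j]; exact memLp_two_id_gaussianReal_zero _
    exact (memLp_map_measure_iff aestronglyMeasurable_id (hNmeas (i, j)).aemeasurable).1 h0
  have intYF : ∀ (n : Fin numMasks) (i : Fin H) (j : Fin W),
      Integrable (fun ω => ((X i j + N (i, j) ω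
        - f (fun i' j' => v n ω j' * (X i' j' + N (i', j') ω)) i j) * (1 - v n ω j)) ^ 2) μ :=
    fun n i j => integrable_sq_mul_bdd
      (((memLp_const (X i j)).add (hNL2 (i, j))).sub (hFL2' n i j)) (mw n j) (hwb n j)
  have intXF : ∀ (n : Fin numMasks) (i : Fin H) (j : Fin W),
      Integrable (fun ω => ((X i j
        - f (fun i' j' => v n ω j' * (X i' j' + N (i', j') ω)) i j) * (1 - v n ω j)) ^ 2) μ :=
    fun n i j => integrable_sq_mul_bdd
      ((memLp_const (X i j)).sub (hFL2' n i j)) (mw n j) (hwb n j)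
  have intSig : ∀ (n : Fin numMasks) (i : Fin H) (j : Fin W),
      Integrable (fun ω => (σ i j * (1 - v n ω j)) ^ 2) μ :=
    fun n i j => integrable_sq_mul_bdd (memLp_const (σ i j)) (mw n j) (hwb n j)
  have hwtv' : ∀ n : Fin numMasks, Integrable
      (fun ω => γ * wtv Wbar (f fun i' j' => v n ω j' * (X i' j' + N (i', j') ω))) μ :=
    fun n => (hwtvInt n).const_mul γ
  have intS1 : ∀ n : Fin numMasks, Integrable (fun ω => ∑ i : Fin H, ∑ j : Fin W,
      ((X i j + N (i, j) ω - f (fun i' j' => v n ω j' * (X i' j' + N (i', j') ω)) i j)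
        * (1 - v n ω j)) ^ 2) μ :=
    fun n => integrable_finset_sum _ fun i _ => integrable_finset_sum _ fun j _ => intYF n i j
  have intS2 : ∀ n : Fin numMasks, Integrable (fun ω => ∑ i : Fin H, ∑ j : Fin W,
      ((X i j - f (fun i' j' => v n ω j' * (X i' j' + N (i', j') ω)) i j)
        * (1 - v n ω j)) ^ 2) μ :=
    fun n => integrable_finset_sum _ fun i _ => integrable_finset_sum _ fun j _ => intXF n i j
  have intS3 : ∀ n : Fin numMasks, Integrable (fun ω => ∑ i : Fin H, ∑ j : Fin W,
      (σ i j * (1 - v n ω j)) ^ 2) μ :=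
    fun n => integrable_finset_sum _ fun i _ => integrable_finset_sum _ fun j _ => intSig n i j
  have intT1 : ∀ n : Fin numMasks, Integrable (fun ω =>
      (∑ i : Fin H, ∑ j : Fin W,
        ((X i j + N (i, j) ω - f (fun i' j' => v n ω j' * (X i' j' + N (i', j') ω)) i j)
          * (1 - v n ω j)) ^ 2)
      + γ * wtv Wbar (f fun i' j' => v n ω j' * (X i' j' + N (i', j') ω))) μ :=
    fun n => (intS1 n).add (hwtv' n)
  have intS23 : ∀ n : Fin numMasks, Integrable (fun ω =>
      (∑ i : Fin H, ∑ j : Fin W,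
        ((X i j - f (fun i' j' => v n ω j' * (X i' j' + N (i', j') ω)) i j)
          * (1 - v n ω j)) ^ 2)
      + ∑ i : Fin H, ∑ j : Fin W, (σ i j * (1 - v n ω j)) ^ 2) μ :=
    fun n => (intS2 n).add (intS3 n)
  have intT2 : ∀ n : Fin numMasks, Integrable (fun ω =>
      ((∑ i : Fin H, ∑ j : Fin W,
        ((X i j - f (fun i' j' => v n ω j' * (X i' j' + N (i', j') ω)) i j)
          * (1 - v n ω j)) ^ 2)
        + ∑ i : Fin H, ∑ j : Fin W, (σ i j * (1 - v n ω j)) ^ 2)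
      + γ * wtv Wbar (f fun i' j' => v n ω j' * (X i' j' + N (i', j') ω))) μ :=
    fun n => (intS23 n).add (hwtv' n)
  rw [integral_finset_sum _ (fun n _ => intT1 n), integral_finset_sum _ (fun n _ => intT2 n)]
  refine Finset.sum_congr rfl fun n _ => ?_
  rw [integral_add (intS1 n) (hwtv' n), integral_add (intS23 n) (hwtv' n),
    integral_add (intS2 n) (intS3 n)]
  congr 1
  rw [integral_finset_sum _ (fun i _ => integrable_finset_sum _ fun j _ => intYF n i j),
    integral_finset_sum _ (fun i _ => integrable_finset_sum _ fun j _ => intXF n i j),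
    integral_finset_sum _ (fun i _ => integrable_finset_sum _ fun j _ => intSig n i j),
    ← Finset.sum_add_distrib]
  refine Finset.sum_congr rfl fun i _ => ?_
  rw [integral_finset_sum _ (fun j _ => intYF n i j),
    integral_finset_sum _ (fun j _ => intXF n i j),
    integral_finset_sum _ (fun j _ => intSig n i j),
    ← Finset.sum_add_distrib]
  refine Finset.sum_congr rfl fun j _ => ?_
  exact core_identity μ X N hNmeas (σ i j) (hσ i j) i j (hNgauss i j) hNindep v hvmeas hvbin
    hMNindep f hf n (hFL2' n i j)
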